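/- arXiv:2211.03765 — 4 statements merged into one kernel-verified Lean document; each statement's English description precedes it below -/
import Mathlib

section
/- Let Γ be an abstract simplicial complex on [m]. For every t ∈ ℝ, the family (t^{a_1+⋯+a_m}/a!) indexed by those a ∈ ℕ^m with supp(a) ∈ Γ is absolutely summable and its sum equals ∑_{F ∈ Γ} (e^t − 1)^{#F}; that is, E(Γ; t) = ∑_{F ∈ Γ} (e^t − 1)^{dim(F)+1}. -/
open Finset

/-- An abstract simplicial complex on `[m]`: contains the empty set and all
singletons, and is closed under taking subsets. -/
def IsSimplicialComplex {m : ℕ} (Γ : Finset (Finset (Fin m))) : Prop :=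
  ∅ ∈ Γ ∧ (∀ i : Fin m, ({i} : Finset (Fin m)) ∈ Γ) ∧ ∀ F ∈ Γ, ∀ G, G ⊆ F → G ∈ Γ

/-! The multi-indices with support exactly `F` contribute `(e^t - 1)^#F` to the series: it
factors as a product over the coordinates, a coordinate in `F` contributing the exponential
series without its constant term and one outside `F` only that constant term `1`. In `ℝ` every
summable family is absolutely summable, so these products of series may be expanded freely. -/

theorem hasSum_fin_pi_prod {κ : Type*} {m : ℕ} {f : Fin m → κ → ℝ} {s : Fin m → ℝ}
    (hf : ∀ i, HasSum (f i) (s i)) :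
    HasSum (fun a : Fin m → κ => ∏ i, f i (a i)) (∏ i, s i) := by
  induction m with
  | zero => simp
  | succ m ih =>
    have hhead := (hf 0).summable.norm
    have htail := ih fun i => hf i.succ
    have hprod := summable_mul_of_summable_norm hhead htail.summable.norm
    rw [← (Fin.consEquiv fun _ => κ).hasSum_iff, Fin.prod_univ_succ]
    refine ((hf 0).mul htail hprod).congr_fun fun z => ?_
    simp [Fin.consEquiv_apply, Fin.prod_univ_succ]

section Support

variable {κ : Type*} [Zero κ] [DecidableEq κ] {m : ℕ} {g : κ → ℝ} {s : ℝ}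

theorem hasSum_ite_support_eq (hg : HasSum g s) (F : Finset (Fin m)) :
    HasSum (fun a : Fin m → κ => if (univ.filter fun i => a i ≠ 0) = F then ∏ i, g (a i) else 0)
      (∏ i, if i ∈ F then s - g 0 else g 0) := by
  set φ : Fin m → κ → ℝ := fun i => if i ∈ F then Function.update g 0 0 else Pi.single 0 (g 0)
  have hφ : ∀ i, HasSum (φ i) (if i ∈ F then s - g 0 else g 0) := fun i => by
    by_cases hi : i ∈ F
    · simpa [φ, hi, sub_eq_neg_add] using hg.update 0 0
    · simpa [φ, hi] using hasSum_pi_single (0 : κ) (g 0)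
  refine (hasSum_fin_pi_prod hφ).congr_fun fun a => ?_
  split_ifs with hsupp
  · refine prod_congr rfl fun i _ => ?_
    have hai : a i ≠ 0 ↔ i ∈ F := by simp [← hsupp]
    by_cases hi : i ∈ F
    · simp [φ, hi, hai.mpr hi]
    · simp [φ, hi, not_not.mp (mt hai.mp hi)]
  · obtain ⟨i, hi⟩ : ∃ i, ¬(a i ≠ 0 ↔ i ∈ F) := by
      by_contra! h
      exact hsupp (ext fun i => by simpa using h i)
    refine (prod_eq_zero (mem_univ i) ?_).symm
    by_cases hF : i ∈ F <;> simp_all [φ]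

theorem hasSum_subtype_support_mem (hg : HasSum g s) (Γ : Finset (Finset (Fin m))) :
    HasSum (fun a : {a : Fin m → κ // (univ.filter fun i => a i ≠ 0) ∈ Γ} => ∏ i, g (a.val i))
      (∑ F ∈ Γ, ∏ i, if i ∈ F then s - g 0 else g 0) := by
  have hind : HasSum ({a : Fin m → κ | (univ.filter fun i => a i ≠ 0) ∈ Γ}.indicator
      fun a : Fin m → κ => ∏ i, g (a i))
      (∑ F ∈ Γ, ∏ i, if i ∈ F then s - g 0 else g 0) :=
    (hasSum_sum fun F _ => hasSum_ite_support_eq hg F).congr_fun fun a => by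
      simp [Set.indicator_apply, sum_ite_eq]
  exact hasSum_subtype_iff_indicator.mpr hind

end Support

theorem pow_sum_div_prod_factorial {K ι : Type*} [Field K] (s : Finset ι) (t : K) (a : ι → ℕ) :
    t ^ (∑ i ∈ s, a i) / ∏ i ∈ s, ((a i).factorial : K) = ∏ i ∈ s, t ^ a i / (a i).factorial := by
  rw [prod_div_distrib, prod_pow_eq_pow_sum]

theorem fineExpHilbertSeries_eq_general (m : ℕ) (Γ : Finset (Finset (Fin m))) (t : ℝ) :
    Summable (fun a : {a : Fin m → ℕ // (univ.filter fun i => a i ≠ 0) ∈ Γ} =>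
        |t ^ (∑ i, a.val i) / ∏ i, (Nat.factorial (a.val i) : ℝ)|) ∧
    ∑' a : {a : Fin m → ℕ // (univ.filter fun i => a i ≠ 0) ∈ Γ},
        t ^ (∑ i, a.val i) / ∏ i, (Nat.factorial (a.val i) : ℝ)
      = ∑ F ∈ Γ, (Real.exp t - 1) ^ F.card := by
  have hexp : HasSum (fun n : ℕ => t ^ n / n.factorial) (Real.exp t) := by
    simpa [Real.exp_eq_exp_ℝ] using NormedSpace.expSeries_div_hasSum_exp t
  have h := hasSum_subtype_support_mem hexp Γ
  simp only [pow_zero, Nat.factorial_zero, Nat.cast_one, div_one, prod_ite_mem, univ_inter,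
    prod_const, ← pow_sum_div_prod_factorial] at h
  exact ⟨h.summable.abs, h.tsum_eq⟩

/-- The fine exponential Hilbert series of `Γ` at `t` equals
`∑_{F ∈ Γ} (e^t - 1)^{dim F + 1}`, the family being absolutely summable. -/
theorem fineExpHilbertSeries_eq (m : ℕ) (Γ : Finset (Finset (Fin m)))
    (hΓ : IsSimplicialComplex Γ) (t : ℝ) :
    Summable (fun a : {a : Fin m → ℕ // (univ.filter fun i => a i ≠ 0) ∈ Γ} =>
        |t ^ (∑ i, a.val i) / ∏ i, (Nat.factorial (a.val i) : ℝ)|) ∧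
    ∑' a : {a : Fin m → ℕ // (univ.filter fun i => a i ≠ 0) ∈ Γ},
        t ^ (∑ i, a.val i) / ∏ i, (Nat.factorial (a.val i) : ℝ)
      = ∑ F ∈ Γ, (Real.exp t - 1) ^ F.card :=
  fineExpHilbertSeries_eq_general m Γ t
end

section
/- Let Γ be an abstract simplicial complex on [m] and let r_1,…,r_m be positive integers. Then the rank over ℚ of the matrix A_Γ of the hierarchical log-linear model equals ∑_{F ∈ Γ} ∏_{f ∈ F} (r_f − 1), where the sum runs over all faces of Γ (the empty face contributing 1). -/
open Finset

/-- A facet is a maximal face. -/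
def IsFacet {m : ℕ} (Γ : Finset (Finset (Fin m))) (F : Finset (Fin m)) : Prop :=
  F ∈ Γ ∧ ∀ G ∈ Γ, F ⊆ G → G = F

instance {m : ℕ} (Γ : Finset (Finset (Fin m))) : DecidablePred (IsFacet Γ) := fun F =>
  decidable_of_iff (F ∈ Γ ∧ ∀ G ∈ Γ, F ⊆ G → G = F) Iff.rfl

/-- The 0/1 matrix of the hierarchical log-linear model: rows indexed by pairs
`(F, j)` with `F` a facet of `Γ` and `j` a tuple of states for the coordinates
in `F`; columns indexed by tuples `i` of states of all `m` variables; the entry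
is `1` iff the restriction of `i` to `F` is `j`. -/
def hierMatrix {m : ℕ} (Γ : Finset (Finset (Fin m))) (r : Fin m → ℕ) :
    Matrix (Σ F : {F : Finset (Fin m) // IsFacet Γ F}, (∀ f : (F.val : Finset (Fin m)), Fin (r f)))
      (∀ i : Fin m, Fin (r i)) ℚ :=
  fun row col => if (∀ f : (row.1.val : Finset (Fin m)), row.2 f = col f) then 1 else 0


/-- Fourier-type change of basis small matrix. Row 0 is all ones, row `a ≠ 0`
is `e_a - e_0`. -/
def hmM (n : ℕ) : Matrix (Fin n) (Fin n) ℚ := fun a b =>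
  if (a : ℕ) = 0 then 1 else (if b = a then 1 else 0) - (if (b : ℕ) = 0 then 1 else 0)

def hmN (n : ℕ) : Matrix (Fin n) (Fin n) ℚ := fun a b =>
  (if a = b ∧ (a : ℕ) ≠ 0 then 1 else 0) + (if (b : ℕ) = 0 then 1 else -1) / n

lemma hmN_colsum (n : ℕ) (hn : 0 < n) (c : Fin n) :
    ∑ a, hmN n a c = if (c : ℕ) = 0 then 1 else 0 := by
  simp only [hmN, Finset.sum_add_distrib]
  rw [Finset.sum_const, Finset.card_univ, Fintype.card_fin]
  have h1 : ∑ a : Fin n, (if a = c ∧ (a : ℕ) ≠ 0 then (1:ℚ) else 0)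
      = if (c : ℕ) ≠ 0 then 1 else 0 := by
    by_cases hc : (c : ℕ) = 0
    · rw [if_neg (fun h => h hc)]
      apply Finset.sum_eq_zero
      intro b _
      by_cases hb : b = c
      · subst hb; simp [hc]
      · simp [hb]
    · rw [if_pos hc]
      rw [Finset.sum_eq_single c]
      · simp [hc]
      · intro b _ hb; simp [hb]
      · simp
  rw [h1]
  by_cases hc : (c : ℕ) = 0 <;> simp [hc, nsmul_eq_mul, neg_div, mul_neg, mul_div_cancel₀, (Nat.cast_ne_zero (R := ℚ)).mpr hn.ne']

lemma hmM_mul_hmN (n : ℕ) (hn : 0 < n) : hmM n * hmN n = 1 := by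
  ext a c
  rw [Matrix.mul_apply, Matrix.one_apply]
  by_cases ha : (a : ℕ) = 0
  · have : ∀ b : Fin n, hmM n a b * hmN n b c = hmN n b c := by
      intro b; simp [hmM, ha]
    simp_rw [this]
    rw [hmN_colsum n hn c]
    have : (a = c) ↔ ((c : ℕ) = 0) := by
      constructor
      · rintro rfl; exact ha
      · intro hc; exact Fin.ext (ha.trans hc.symm)
    simp [this]
  · have : ∀ b : Fin n, hmM n a b * hmN n b c
        = (if b = a then 1 else 0) * hmN n b c - (if (b:ℕ) = 0 then 1 else 0) * hmN n b c := by
      intro b; simp [hmM, ha, sub_mul]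
    simp_rw [this, Finset.sum_sub_distrib]
    have h1 : ∑ b : Fin n, (if b = a then (1:ℚ) else 0) * hmN n b c = hmN n a c := by
      rw [Finset.sum_eq_single a]
      · simp
      · intro b _ hb; simp [hb]
      · simp
    rw [h1]
    have h2 : ∑ b : Fin n, (if (b:ℕ) = 0 then (1:ℚ) else 0) * hmN n b c
        = hmN n ⟨0, hn⟩ c := by
      rw [Finset.sum_eq_single (⟨0, hn⟩ : Fin n)]
      · simp
      · intro b _ hb
        have : (b : ℕ) ≠ 0 := fun h => hb (Fin.ext h)
        simp [this]
      · simp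
    rw [h2]
    simp only [hmN, ha]
    by_cases hac : a = c
    · subst hac; simp [ha]
    · have : ¬ ((⟨0,hn⟩ : Fin n) = c ∧ (0:ℕ) ≠ 0) := by simp
      simp [hac, this]

def hmC {m : ℕ} (r : Fin m → ℕ) : Matrix (∀ f, Fin (r f)) (∀ f, Fin (r f)) ℚ :=
  fun i j => ∏ f, hmM (r f) (i f) (j f)

def hmD {m : ℕ} (r : Fin m → ℕ) : Matrix (∀ f, Fin (r f)) (∀ f, Fin (r f)) ℚ :=
  fun i j => ∏ f, hmN (r f) (i f) (j f)

lemma hmC_mul_hmD {m : ℕ} (r : Fin m → ℕ) (hr : ∀ i, 0 < r i) : hmC r * hmD r = 1 := by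
  ext i j
  rw [Matrix.mul_apply, Matrix.one_apply]
  have h1 : ∀ k : ∀ f, Fin (r f), hmC r i k * hmD r k j
      = ∏ f, (hmM (r f) (i f) (k f) * hmN (r f) (k f) (j f)) := by
    intro k; rw [hmC, hmD, Finset.prod_mul_distrib]
  simp_rw [h1]
  have h2 : ∑ k : ∀ f, Fin (r f), ∏ f, (hmM (r f) (i f) (k f) * hmN (r f) (k f) (j f))
      = ∏ f, ∑ a : Fin (r f), (hmM (r f) (i f) a * hmN (r f) a (j f)) := by
    rw [Finset.prod_univ_sum (fun f => (Finset.univ : Finset (Fin (r f))))]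
    rw [Fintype.piFinset_univ]
  rw [h2]
  have h3 : ∀ f, ∑ a : Fin (r f), (hmM (r f) (i f) a * hmN (r f) a (j f))
      = if i f = j f then 1 else 0 := by
    intro f
    have := congrFun (congrFun (hmM_mul_hmN (r f) (hr f)) (i f)) (j f)
    rw [Matrix.mul_apply, Matrix.one_apply] at this
    exact this
  simp_rw [h3]
  rw [Finset.prod_boole]
  simp [funext_iff]

lemma hmD_mul_hmC {m : ℕ} (r : Fin m → ℕ) (hr : ∀ i, 0 < r i) : hmD r * hmC r = 1 :=
  mul_eq_one_comm.mp (hmC_mul_hmD r hr)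

noncomputable def hmCinv {m : ℕ} (r : Fin m → ℕ) (hr : ∀ i, 0 < r i) :
    Invertible (hmC r) := ⟨hmD r, hmD_mul_hmC r hr, hmC_mul_hmD r hr⟩

def hmSupp {m : ℕ} (r : Fin m → ℕ) (i : ∀ f, Fin (r f)) : Finset (Fin m) :=
  Finset.univ.filter fun f => (i f : ℕ) ≠ 0

lemma exists_facet {m : ℕ} (Γ : Finset (Finset (Fin m))) {F : Finset (Fin m)} (hF : F ∈ Γ) :
    ∃ G, IsFacet Γ G ∧ F ⊆ G := by
  obtain ⟨G, hG, hmax⟩ := Finset.exists_max_image (Γ.filter (F ⊆ ·)) Finset.card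
    ⟨F, Finset.mem_filter.mpr ⟨hF, subset_rfl⟩⟩
  rw [Finset.mem_filter] at hG
  refine ⟨G, ⟨hG.1, fun H hH hGH => ?_⟩, hG.2⟩
  have hHs : H ∈ Γ.filter (F ⊆ ·) := Finset.mem_filter.mpr ⟨hH, hG.2.trans hGH⟩
  exact (Finset.eq_of_subset_of_card_le hGH (hmax H hHs)).symm

lemma row_mem_span {m : ℕ} (Γ : Finset (Finset (Fin m))) (hΓ : IsSimplicialComplex Γ)
    (r : Fin m → ℕ) (hr : ∀ i, 0 < r i)
    (row : Σ F : {F : Finset (Fin m) // IsFacet Γ F}, (∀ f : (F.val : Finset (Fin m)), Fin (r f))) :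
    hierMatrix Γ r row ∈
      Submodule.span ℚ (hmC r '' {i : ∀ f, Fin (r f) | hmSupp r i ∈ Γ}) := by
  obtain ⟨⟨F, hF⟩, l⟩ := row
  set v : (∀ f, Fin (r f)) → ℚ := hierMatrix Γ r ⟨⟨F, hF⟩, l⟩ with hv
  set c : (∀ f, Fin (r f)) → ℚ := fun i => ∑ x, v x * hmD r x i with hc
  -- v is the combination with coefficients c over the rows of hmC
  have hvc : ∀ j, v j = ∑ i, c i * hmC r i j := by
    have h1 : Matrix.vecMul (Matrix.vecMul v (hmD r)) (hmC r) = v := by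
      rw [Matrix.vecMul_vecMul, hmD_mul_hmC r hr, Matrix.vecMul_one]
    intro j
    conv_lhs => rw [← h1]
    simp [Matrix.vecMul, dotProduct, hc]
  -- coefficients vanish outside the good set
  have hzero : ∀ i, hmSupp r i ∉ Γ → c i = 0 := by
    intro i hi
    have hsub : ¬ hmSupp r i ⊆ F := fun h => hi (hΓ.2.2 F hF.1 _ h)
    obtain ⟨f0, hf0s, hf0F⟩ := Finset.not_subset.mp hsub
    have hf0 : (i f0 : ℕ) ≠ 0 := (Finset.mem_filter.mp hf0s).2
    set h : ∀ f : Fin m, Fin (r f) → ℚ := fun f a =>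
      (if hf : f ∈ F then (if a = l ⟨f, hf⟩ then (1:ℚ) else 0) else 1) * hmN (r f) a (i f)
      with hh
    have hfact : ∀ x, v x * hmD r x i = ∏ f, h f (x f) := by
      intro x
      have hvx : v x = ∏ f, (if hf : f ∈ F then (if x f = l ⟨f, hf⟩ then (1:ℚ) else 0) else 1) := by
        have : ∀ f : Fin m,
            (if hf : f ∈ F then (if x f = l ⟨f, hf⟩ then (1:ℚ) else 0) else 1)
            = if (∀ hf : f ∈ F, x f = l ⟨f, hf⟩) then 1 else 0 := by
          intro f
          by_cases hf : f ∈ F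
          · by_cases hx : x f = l ⟨f, hf⟩ <;> simp [hf, hx]
          · simp [hf]
        simp_rw [this]
        rw [Finset.prod_boole, hv, hierMatrix]
        congr 1
        simp only [eq_iff_iff]
        constructor
        · intro hall f _ hf; exact ((hall ⟨f, hf⟩).symm)
        · intro hall g; exact (hall g (Finset.mem_univ _) g.2).symm
      rw [hvx, hmD, ← Finset.prod_mul_distrib]
    have : c i = ∏ f, ∑ a : Fin (r f), h f a := by
      rw [hc]
      simp_rw [hfact]
      rw [Finset.prod_univ_sum (fun f => (Finset.univ : Finset (Fin (r f))))]
      rw [Fintype.piFinset_univ]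
    rw [this]
    apply Finset.prod_eq_zero (Finset.mem_univ f0)
    have : ∀ a : Fin (r f0), h f0 a = hmN (r f0) a (i f0) := by
      intro a; simp [hh, hf0F]
    simp_rw [this]
    rw [hmN_colsum _ (hr f0)]
    simp [hf0]
  -- conclude membership
  have hsum : v = ∑ i ∈ Finset.univ.filter (fun i => hmSupp r i ∈ Γ), c i • hmC r i := by
    funext j
    rw [hvc j, Finset.sum_apply]
    simp only [Pi.smul_apply, smul_eq_mul]
    symm
    apply Finset.sum_subset (Finset.filter_subset _ _)
    intro i _ hi
    rw [hzero i (fun h => hi (Finset.mem_filter.mpr ⟨Finset.mem_univ _, h⟩)), zero_mul]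
  rw [hsum]
  apply Submodule.sum_mem
  intro i hi
  apply Submodule.smul_mem
  apply Submodule.subset_span
  exact ⟨i, (Finset.mem_filter.mp hi).2, rfl⟩

lemma basisrow_mem_span {m : ℕ} (Γ : Finset (Finset (Fin m))) (r : Fin m → ℕ)
    (hr : ∀ i, 0 < r i) (i : ∀ f, Fin (r f)) (hi : hmSupp r i ∈ Γ) :
    hmC r i ∈ Submodule.span ℚ (Set.range (hierMatrix Γ r)) := by
  obtain ⟨G, hG, hsub⟩ := exists_facet Γ hi
  set ext : (∀ f : (G : Finset (Fin m)), Fin (r f)) → (∀ f, Fin (r f)) :=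
    fun l f => if hf : f ∈ G then l ⟨f, hf⟩ else ⟨0, hr f⟩ with hext
  have key : hmC r i = ∑ l : ∀ f : (G : Finset (Fin m)), Fin (r f),
      (hmC r i (ext l)) • hierMatrix Γ r ⟨⟨G, hG⟩, l⟩ := by
    funext j
    rw [Finset.sum_apply]
    simp only [Pi.smul_apply, smul_eq_mul, hierMatrix]
    have hcond : ∀ l : ∀ f : (G : Finset (Fin m)), Fin (r f),
        (∀ f : (G : Finset (Fin m)), l f = j f) ↔ l = fun f : (G : Finset (Fin m)) => j f := by
      intro l; exact funext_iff.symm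
    simp_rw [hcond]
    rw [Finset.sum_eq_single (fun f : (G : Finset (Fin m)) => j f)]
    · simp only [if_true, mul_one]
      symm
      unfold hmC
      apply Finset.prod_congr rfl
      intro f _
      by_cases hf : f ∈ G
      · have : ext (fun f : (G : Finset (Fin m)) => j f) f = j f := by
          simp [hext, hf]
        rw [this]
      · have h0 : (i f : ℕ) = 0 := by
          by_contra h
          exact hf (hsub (Finset.mem_filter.mpr ⟨Finset.mem_univ _, h⟩))
        simp [hmM, h0]
    · intro l _ hl
      rw [if_neg hl, mul_zero]
    · simp
  rw [key]
  apply Submodule.sum_mem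
  intro l _
  exact Submodule.smul_mem _ _ (Submodule.subset_span ⟨⟨⟨G, hG⟩, l⟩, rfl⟩)

lemma fin_card_ne_zero (n : ℕ) (hn : 0 < n) :
    (Finset.univ.filter fun a : Fin n => (a : ℕ) ≠ 0).card = n - 1 := by
  have h0 : (Finset.univ.filter fun a : Fin n => (a : ℕ) = 0) = {(⟨0, hn⟩ : Fin n)} := by
    ext a
    simp [Fin.ext_iff]
  rw [Finset.filter_not, Finset.card_sdiff_of_subset (Finset.filter_subset _ _), h0]
  simp

lemma card_supp_eq {m : ℕ} (r : Fin m → ℕ) (hr : ∀ i, 0 < r i) (F : Finset (Fin m)) :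
    (Finset.univ.filter fun i : ∀ f, Fin (r f) => hmSupp r i = F).card
      = ∏ f ∈ F, (r f - 1) := by
  rw [Finset.card_filter]
  have h1 : ∀ i : ∀ f, Fin (r f), (if hmSupp r i = F then (1:ℕ) else 0)
      = ∏ f, if ((i f : ℕ) ≠ 0 ↔ f ∈ F) then 1 else 0 := by
    intro i
    rw [Finset.prod_boole]
    congr 1
    simp only [eq_iff_iff]
    constructor
    · intro h f _
      rw [← h, hmSupp, Finset.mem_filter]
      simp
    · intro h
      ext f
      rw [hmSupp, Finset.mem_filter]
      simp [h f (Finset.mem_univ f)]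
  simp_rw [h1]
  rw [← Fintype.piFinset_univ,
    ← Finset.prod_univ_sum (fun f => (Finset.univ : Finset (Fin (r f))))
      (fun f a => if ((a : ℕ) ≠ 0 ↔ f ∈ F) then (1:ℕ) else 0)]
  have h2 : ∀ f : Fin m, (∑ a : Fin (r f), if ((a : ℕ) ≠ 0 ↔ f ∈ F) then (1:ℕ) else 0)
      = if f ∈ F then r f - 1 else 1 := by
    intro f
    by_cases hf : f ∈ F
    · simp only [hf, iff_true, if_true]
      rw [← Finset.card_filter, fin_card_ne_zero _ (hr f)]
    · simp only [hf, iff_false, not_not, if_false]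
      rw [← Finset.card_filter]
      have h0 : (Finset.univ.filter fun a : Fin (r f) => (a : ℕ) = 0)
          = {(⟨0, hr f⟩ : Fin (r f))} := by
        ext a
        simp [Fin.ext_iff]
      rw [h0, Finset.card_singleton]
  simp_rw [h2]
  rw [← Finset.prod_filter]
  congr 1
  ext f
  simp


theorem rank_hierMatrix (m : ℕ) (Γ : Finset (Finset (Fin m)))
    (hΓ : IsSimplicialComplex Γ) (r : Fin m → ℕ) (hr : ∀ i, 0 < r i) :
    ((hierMatrix Γ r).rank : ℤ) = ∑ F ∈ Γ, ∏ f ∈ F, ((r f : ℤ) - 1) := by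
  classical
  haveI := hmCinv r hr
  -- rank equals the dimension of the row space
  have hrank : (hierMatrix Γ r).rank
      = Module.finrank ℚ (Submodule.span ℚ (Set.range (hierMatrix Γ r))) := by
    rw [← Matrix.rank_transpose, Matrix.rank_eq_finrank_span_cols]
    rfl
  -- the row space equals the span of the good rows of hmC
  have hspan : Submodule.span ℚ (Set.range (hierMatrix Γ r))
      = Submodule.span ℚ (hmC r '' {i : ∀ f, Fin (r f) | hmSupp r i ∈ Γ}) := by
    apply le_antisymm
    · rw [Submodule.span_le]
      rintro _ ⟨row, rfl⟩
      exact row_mem_span Γ hΓ r hr row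
    · rw [Submodule.span_le]
      rintro _ ⟨i, hi, rfl⟩
      exact basisrow_mem_span Γ r hr i hi
  -- the good rows of hmC are linearly independent
  have hLI : LinearIndependent ℚ
      (fun x : {i : ∀ f, Fin (r f) // hmSupp r i ∈ Γ} => hmC r x.val) :=
    (Matrix.linearIndependent_rows_of_invertible (hmC r)).comp Subtype.val Subtype.val_injective
  have himg : hmC r '' {i : ∀ f, Fin (r f) | hmSupp r i ∈ Γ}
      = Set.range (fun x : {i : ∀ f, Fin (r f) // hmSupp r i ∈ Γ} => hmC r x.val) := by
    exact Set.image_eq_range (hmC r) _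
  have hfin : (hierMatrix Γ r).rank
      = Fintype.card {i : ∀ f, Fin (r f) // hmSupp r i ∈ Γ} := by
    rw [hrank, hspan, himg, finrank_span_eq_card hLI]
  -- count the good rows
  have hcard : Fintype.card {i : ∀ f, Fin (r f) // hmSupp r i ∈ Γ}
      = ∑ F ∈ Γ, ∏ f ∈ F, (r f - 1) := by
    rw [Fintype.card_subtype]
    rw [Finset.card_eq_sum_card_fiberwise
      (f := hmSupp r) (s := Finset.univ.filter fun i => hmSupp r i ∈ Γ) (t := Γ) (fun i hi => (Finset.mem_filter.mp hi).2)]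
    apply Finset.sum_congr rfl
    intro F hF
    rw [← card_supp_eq r hr F]
    congr 1
    ext i
    simp only [Finset.mem_filter, Finset.mem_univ, true_and]
    constructor
    · rintro ⟨_, h⟩; exact h
    · rintro h; exact ⟨h ▸ hF, h⟩
  rw [hfin, hcard, Nat.cast_sum]
  apply Finset.sum_congr rfl
  intro F _
  rw [Nat.cast_prod]
  apply Finset.prod_congr rfl
  intro f _
  rw [Nat.cast_sub (hr f)]
  simp
end

section
/- Let m ≥ 3 and let Γ be the cyclic complex on [m], whose faces are the empty set, the singletons {i} for 1 ≤ i ≤ m, and the edges {i, i+1} for 1 ≤ i ≤ m−1 together with {m, 1}. Let r be a positive integer and take r_1 = ⋯ = r_m = r. Then rank(A_Γ) = 1 − m r + m r^2. -/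
open Finset

set_option linter.unusedSectionVars false

namespace CycAux

variable {m : ℕ}

def csucc (hm : 3 ≤ m) (i : Fin m) : Fin m := ⟨((i : ℕ) + 1) % m, Nat.mod_lt _ (lt_of_lt_of_le (Nat.succ_pos 2) hm)⟩

lemma csucc_val (hm : 3 ≤ m) (i : Fin m) :
    ((csucc hm i : Fin m) : ℕ) = if (i : ℕ) + 1 = m then 0 else (i : ℕ) + 1 := by
  have hi := i.isLt
  simp only [csucc]
  split
  · simp [*]
  · exact Nat.mod_eq_of_lt (by omega)

lemma csucc_ne (hm : 3 ≤ m) (i : Fin m) : csucc hm i ≠ i := by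
  intro h
  have := congrArg Fin.val h
  rw [csucc_val] at this
  have hi := i.isLt
  split at this <;> omega

lemma csucc_inj (hm : 3 ≤ m) {i j : Fin m} (h : csucc hm i = csucc hm j) : i = j := by
  have := congrArg Fin.val h
  rw [csucc_val, csucc_val] at this
  have hi := i.isLt; have hj := j.isLt
  apply Fin.ext
  split at this <;> split at this <;> omega

lemma csucc_csucc_ne (hm : 3 ≤ m) (i : Fin m) : csucc hm (csucc hm i) ≠ i := by
  intro h
  have := congrArg Fin.val h
  rw [csucc_val, csucc_val] at this
  have hi := i.isLt
  split at this <;> split at this <;> omega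

def edge (hm : 3 ≤ m) (i : Fin m) : Finset (Fin m) := {i, csucc hm i}

lemma mem_edge_left (hm : 3 ≤ m) (i : Fin m) : i ∈ edge hm i := by simp [edge]

lemma mem_edge_right (hm : 3 ≤ m) (i : Fin m) : csucc hm i ∈ edge hm i := by simp [edge]

lemma card_edge (hm : 3 ≤ m) (i : Fin m) : (edge hm i).card = 2 := by
  rw [edge, card_insert_of_notMem (by simp [Ne.symm (csucc_ne hm i)]), card_singleton]

def cyclicΓ (hm : 3 ≤ m) : Finset (Finset (Fin m)) :=
  {(∅ : Finset (Fin m))}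
    ∪ univ.image (fun i : Fin m => ({i} : Finset (Fin m)))
    ∪ univ.image (fun i : Fin m => edge hm i)

lemma mem_cyclicΓ (hm : 3 ≤ m) (G : Finset (Fin m)) :
    G ∈ cyclicΓ hm ↔ G = ∅ ∨ (∃ i, G = {i}) ∨ ∃ i, G = edge hm i := by
  simp [cyclicΓ, eq_comm]

lemma isFacet_cyclicΓ (hm : 3 ≤ m) (F : Finset (Fin m)) :
    IsFacet (cyclicΓ hm) F ↔ ∃ i, F = edge hm i := by
  constructor
  · rintro ⟨hF, hmax⟩
    rcases (mem_cyclicΓ hm F).1 hF with rfl | ⟨i, rfl⟩ | h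
    · exfalso
      have h0 : ({(⟨0, by omega⟩ : Fin m)} : Finset (Fin m)) ∈ cyclicΓ hm :=
        (mem_cyclicΓ hm _).2 (Or.inr (Or.inl ⟨_, rfl⟩))
      have := hmax _ h0 (empty_subset _)
      simp at this
    · exfalso
      have he : edge hm i ∈ cyclicΓ hm := (mem_cyclicΓ hm _).2 (Or.inr (Or.inr ⟨i, rfl⟩))
      have hsub : ({i} : Finset (Fin m)) ⊆ edge hm i := by simp [edge]
      have := hmax _ he hsub
      have hc := card_edge hm i
      rw [this] at hc
      simp at hc
    · exact h
  · rintro ⟨i, rfl⟩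
    refine ⟨(mem_cyclicΓ hm _).2 (Or.inr (Or.inr ⟨i, rfl⟩)), ?_⟩
    intro G hG hsub
    rcases (mem_cyclicΓ hm G).1 hG with rfl | ⟨j, rfl⟩ | ⟨j, rfl⟩
    · exact absurd (hsub (by simp [edge])) (notMem_empty i)
    · have := (card_le_card hsub).trans_eq (card_singleton j)
      rw [card_edge] at this
      omega
    · exact (eq_of_subset_of_card_le hsub (by rw [card_edge, card_edge])).symm

lemma facet_edge (hm : 3 ≤ m) (i : Fin m) : IsFacet (cyclicΓ hm) (edge hm i) :=
  (isFacet_cyclicΓ hm _).2 ⟨i, rfl⟩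

/-! ### The linear algebra -/

variable {r : ℕ} [NeZero r]

/-- indicator -/
def dd (a y : Fin r) : ℚ := if y = a then 1 else 0

lemma sum_dd (y : Fin r) : ∑ a : Fin r, dd a y = 1 := by simp [dd]

lemma dd_zero (y : Fin r) : dd 0 y = 1 - ∑ a : {a : Fin r // a ≠ 0}, dd (a : Fin r) y := by
  have h1 : ∑ a : {a : Fin r // a ≠ 0}, dd (a : Fin r) y
      = ∑ a ∈ (univ : Finset (Fin r)).erase 0, dd a y := by
    rw [← Finset.sum_subtype (p := fun a : Fin r => a ≠ 0)
      ((univ : Finset (Fin r)).erase 0) (by simp) (fun a => dd a y)]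
  rw [h1, ← sum_dd y, ← Finset.add_sum_erase (univ : Finset (Fin r)) (fun a => dd a y) (mem_univ 0)]
  ring

lemma dd_self (a : Fin r) : dd a a = 1 := by simp [dd]

lemma dd_ne {a y : Fin r} (h : y ≠ a) : dd a y = 0 := by simp [dd, h]

/-- Index type of the distinguished spanning family. -/
abbrev BIdx (m r : ℕ) [NeZero r] : Type :=
  Unit ⊕ (Fin m × {a : Fin r // a ≠ 0}) ⊕ (Fin m × ({a : Fin r // a ≠ 0} × {b : Fin r // b ≠ 0}))

/-- The distinguished spanning family (a basis of the row space). -/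
def Bf (hm : 3 ≤ m) (r : ℕ) [NeZero r] : BIdx m r → (Fin m → Fin r) → ℚ
  | Sum.inl _ => fun _ => 1
  | Sum.inr (Sum.inl p) => fun x => dd (p.2 : Fin r) (x p.1)
  | Sum.inr (Sum.inr p) => fun x => dd (p.2.1 : Fin r) (x p.1) * dd (p.2.2 : Fin r) (x (csucc hm p.1))

@[simp] lemma Bf_inl (hm : 3 ≤ m) (u : Unit) : Bf hm r (Sum.inl u) = fun _ => 1 := rfl

@[simp] lemma Bf_f (hm : 3 ≤ m) (p : Fin m × {a : Fin r // a ≠ 0}) :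
    Bf hm r (Sum.inr (Sum.inl p)) = fun x => dd (p.2 : Fin r) (x p.1) := rfl

@[simp] lemma Bf_g (hm : 3 ≤ m) (p : Fin m × ({a : Fin r // a ≠ 0} × {b : Fin r // b ≠ 0})) :
    Bf hm r (Sum.inr (Sum.inr p)) =
      fun x => dd (p.2.1 : Fin r) (x p.1) * dd (p.2.2 : Fin r) (x (csucc hm p.1)) := rfl

lemma row_eq (hm : 3 ≤ m) {F : Finset (Fin m)} (i : Fin m) (hFe : F = edge hm i)
    (hF : IsFacet (cyclicΓ hm) F) (j : ∀ f : (F : Finset (Fin m)), Fin r)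
    (hi : i ∈ F) (hsi : csucc hm i ∈ F) :
    hierMatrix (cyclicΓ hm) (fun _ => r) ⟨⟨F, hF⟩, j⟩
      = fun x => dd (j ⟨i, hi⟩) (x i) * dd (j ⟨csucc hm i, hsi⟩) (x (csucc hm i)) := by
  subst hFe
  funext x
  show (if (∀ f : (edge hm i : Finset (Fin m)), j f = x f) then (1 : ℚ) else 0) = _
  have hiff : (∀ f : (edge hm i : Finset (Fin m)), j f = x f)
      ↔ (x i = j ⟨i, hi⟩ ∧ x (csucc hm i) = j ⟨csucc hm i, hsi⟩) := by
    constructor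
    · intro h
      exact ⟨(h ⟨i, hi⟩).symm, (h ⟨csucc hm i, hsi⟩).symm⟩
    · rintro ⟨h1, h2⟩ ⟨f, hf⟩
      simp only [edge, mem_insert, mem_singleton] at hf
      rcases hf with rfl | rfl
      · exact h1.symm
      · exact h2.symm
  by_cases hc : ∀ f : (edge hm i : Finset (Fin m)), j f = x f
  · rw [if_pos hc]
    obtain ⟨e1, e2⟩ := hiff.1 hc
    rw [e1, e2, dd_self, dd_self]
    norm_num
  · rw [if_neg hc]
    by_cases h1 : x i = j ⟨i, hi⟩
    · have h2 : x (csucc hm i) ≠ j ⟨csucc hm i, hsi⟩ := fun h2 => hc (hiff.2 ⟨h1, h2⟩)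
      rw [dd_ne h2, mul_zero]
    · rw [dd_ne h1, zero_mul]

/-- tuple on an edge with prescribed values -/
def jpair (hm : 3 ≤ m) (i : Fin m) (a b : Fin r) (f : (edge hm i : Finset (Fin m))) : Fin r :=
  if (f : Fin m) = i then a else b

lemma G_mem_rows (hm : 3 ≤ m) (i : Fin m) (a b : Fin r) :
    (fun x : Fin m → Fin r => dd a (x i) * dd b (x (csucc hm i)))
      ∈ Submodule.span ℚ (Set.range (hierMatrix (cyclicΓ hm) (fun _ => r))) := by
  apply Submodule.subset_span
  refine ⟨⟨⟨edge hm i, facet_edge hm i⟩, jpair hm i a b⟩, ?_⟩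
  rw [row_eq hm i rfl (facet_edge hm i) (jpair hm i a b) (mem_edge_left hm i) (mem_edge_right hm i)]
  have e1 : jpair hm i a b ⟨i, mem_edge_left hm i⟩ = a := if_pos rfl
  have e2 : jpair hm i a b ⟨csucc hm i, mem_edge_right hm i⟩ = b := if_neg (csucc_ne hm i)
  rw [e1, e2]

lemma G_mem_B (hm : 3 ≤ m) (i : Fin m) (a b : Fin r) :
    (fun x : Fin m → Fin r => dd a (x i) * dd b (x (csucc hm i)))
      ∈ Submodule.span ℚ (Set.range (Bf hm r)) := by
  by_cases ha : a = 0 <;> by_cases hb : b = 0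
  · subst ha; subst hb
    have key : (fun x : Fin m → Fin r => dd 0 (x i) * dd 0 (x (csucc hm i)))
        = Bf hm r (Sum.inl ())
          - (∑ a' : {a : Fin r // a ≠ 0}, Bf hm r (Sum.inr (Sum.inl (i, a'))))
          - (∑ b' : {a : Fin r // a ≠ 0}, Bf hm r (Sum.inr (Sum.inl (csucc hm i, b'))))
          + (∑ a' : {a : Fin r // a ≠ 0}, ∑ b' : {a : Fin r // a ≠ 0},
              Bf hm r (Sum.inr (Sum.inr (i, a', b')))) := by
      funext x
      simp only [Bf_inl, Bf_f, Bf_g, Pi.add_apply, Pi.sub_apply, Finset.sum_apply]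
      rw [dd_zero (x i), dd_zero (x (csucc hm i))]
      rw [show (∑ a' : {a : Fin r // a ≠ 0}, ∑ b' : {a : Fin r // a ≠ 0},
            dd (a' : Fin r) (x i) * dd (b' : Fin r) (x (csucc hm i)))
          = (∑ a' : {a : Fin r // a ≠ 0}, dd (a' : Fin r) (x i))
              * (∑ b' : {a : Fin r // a ≠ 0}, dd (b' : Fin r) (x (csucc hm i)))
        from (Fintype.sum_mul_sum _ _).symm]
      ring
    rw [key]
    refine add_mem (sub_mem (sub_mem (Submodule.subset_span ⟨_, rfl⟩)
      (Submodule.sum_mem _ fun a' _ => Submodule.subset_span ⟨_, rfl⟩))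
      (Submodule.sum_mem _ fun b' _ => Submodule.subset_span ⟨_, rfl⟩))
      (Submodule.sum_mem _ fun a' _ => Submodule.sum_mem _ fun b' _ =>
        Submodule.subset_span ⟨_, rfl⟩)
  · subst ha
    have key : (fun x : Fin m → Fin r => dd 0 (x i) * dd b (x (csucc hm i)))
        = Bf hm r (Sum.inr (Sum.inl (csucc hm i, ⟨b, hb⟩)))
          - (∑ a' : {a : Fin r // a ≠ 0}, Bf hm r (Sum.inr (Sum.inr (i, a', ⟨b, hb⟩)))) := by
      funext x
      simp only [Bf_f, Bf_g, Pi.sub_apply, Finset.sum_apply]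
      rw [dd_zero (x i), sub_mul, one_mul, Finset.sum_mul]
    rw [key]
    exact sub_mem (Submodule.subset_span ⟨_, rfl⟩)
      (Submodule.sum_mem _ fun a' _ => Submodule.subset_span ⟨_, rfl⟩)
  · subst hb
    have key : (fun x : Fin m → Fin r => dd a (x i) * dd 0 (x (csucc hm i)))
        = Bf hm r (Sum.inr (Sum.inl (i, ⟨a, ha⟩)))
          - (∑ b' : {a : Fin r // a ≠ 0}, Bf hm r (Sum.inr (Sum.inr (i, ⟨a, ha⟩, b')))) := by
      funext x
      simp only [Bf_f, Bf_g, Pi.sub_apply, Finset.sum_apply]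
      rw [dd_zero (x (csucc hm i)), mul_sub, mul_one, Finset.mul_sum]
    rw [key]
    exact sub_mem (Submodule.subset_span ⟨_, rfl⟩)
      (Submodule.sum_mem _ fun b' _ => Submodule.subset_span ⟨_, rfl⟩)
  · exact Submodule.subset_span ⟨Sum.inr (Sum.inr (i, ⟨a, ha⟩, ⟨b, hb⟩)), rfl⟩

lemma span_rows (hm : 3 ≤ m) :
    Submodule.span ℚ (Set.range (hierMatrix (cyclicΓ hm) (fun _ : Fin m => r)))
      = Submodule.span ℚ (Set.range (Bf hm r)) := by
  apply le_antisymm <;> rw [Submodule.span_le]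
  · rintro _ ⟨⟨⟨F, hF⟩, j⟩, rfl⟩
    obtain ⟨i, hFe⟩ := (isFacet_cyclicΓ hm F).1 hF
    have hi : i ∈ F := by rw [hFe]; exact mem_edge_left hm i
    have hsi : csucc hm i ∈ F := by rw [hFe]; exact mem_edge_right hm i
    rw [row_eq hm i hFe hF j hi hsi]
    exact G_mem_B hm i _ _
  · rintro _ ⟨t, rfl⟩
    rcases t with u | p | p
    · -- the constant 1
      have i0 : Fin m := ⟨0, by omega⟩
      have key : Bf hm r (Sum.inl u)
          = ∑ a : Fin r, ∑ b : Fin r,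
              (fun x : Fin m → Fin r => dd a (x i0) * dd b (x (csucc hm i0))) := by
        funext x
        simp only [Bf_inl, Finset.sum_apply]
        rw [← Fintype.sum_mul_sum, sum_dd, sum_dd, one_mul]
      rw [key]
      exact Submodule.sum_mem _ fun a _ => Submodule.sum_mem _ fun b _ => G_mem_rows hm i0 a b
    · obtain ⟨i, a⟩ := p
      have key : Bf hm r (Sum.inr (Sum.inl (i, a)))
          = ∑ b : Fin r, (fun x : Fin m → Fin r => dd (a : Fin r) (x i) * dd b (x (csucc hm i))) := by
        funext x
        simp only [Bf_f, Finset.sum_apply]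
        rw [← Finset.mul_sum, sum_dd, mul_one]
      rw [key]
      exact Submodule.sum_mem _ fun b _ => G_mem_rows hm i _ b
    · obtain ⟨i, a, b⟩ := p
      exact G_mem_rows hm i (a : Fin r) (b : Fin r)

lemma Bf_li (hm : 3 ≤ m) : LinearIndependent ℚ (Bf hm r) := by
  rw [Fintype.linearIndependent_iff]
  intro g hg
  have expand : ∀ x : Fin m → Fin r,
      g (Sum.inl ())
        + ((∑ p : Fin m × {a : Fin r // a ≠ 0},
            g (Sum.inr (Sum.inl p)) * dd (p.2 : Fin r) (x p.1))
        + (∑ p : Fin m × ({a : Fin r // a ≠ 0} × {b : Fin r // b ≠ 0}),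
            g (Sum.inr (Sum.inr p))
              * (dd (p.2.1 : Fin r) (x p.1) * dd (p.2.2 : Fin r) (x (csucc hm p.1))))) = 0 := by
    intro x
    have h := congrFun hg x
    rw [Finset.sum_apply] at h
    simp only [Pi.smul_apply, smul_eq_mul, Pi.zero_apply] at h
    rw [Fintype.sum_sum_type, Fintype.sum_sum_type] at h
    simpa [Bf_inl, Bf_f, Bf_g] using h
  -- Stage 1 : constant coefficient
  have h0 : g (Sum.inl ()) = 0 := by
    have h := expand (fun _ => 0)
    have e1 : (∑ p : Fin m × {a : Fin r // a ≠ 0},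
        g (Sum.inr (Sum.inl p)) * dd (p.2 : Fin r) ((fun _ => (0 : Fin r)) p.1)) = 0 :=
      Finset.sum_eq_zero fun p _ => by rw [dd_ne (Ne.symm p.2.2), mul_zero]
    have e2 : (∑ p : Fin m × ({a : Fin r // a ≠ 0} × {b : Fin r // b ≠ 0}),
        g (Sum.inr (Sum.inr p)) * (dd (p.2.1 : Fin r) ((fun _ => (0 : Fin r)) p.1)
          * dd (p.2.2 : Fin r) ((fun _ => (0 : Fin r)) (csucc hm p.1)))) = 0 :=
      Finset.sum_eq_zero fun p _ => by rw [dd_ne (Ne.symm p.2.1.2), zero_mul, mul_zero]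
    rw [e1, e2] at h
    linarith
  -- Stage 2 : single-variable coefficients
  have h1 : ∀ p : Fin m × {a : Fin r // a ≠ 0}, g (Sum.inr (Sum.inl p)) = 0 := by
    rintro ⟨i, a⟩
    set x1 : Fin m → Fin r := fun k => if k = i then (a : Fin r) else 0 with hx1
    have h := expand x1
    have hx1i : x1 i = (a : Fin r) := if_pos rfl
    have e1 : (∑ p : Fin m × {a : Fin r // a ≠ 0},
        g (Sum.inr (Sum.inl p)) * dd (p.2 : Fin r) (x1 p.1))
        = g (Sum.inr (Sum.inl (i, a))) := by
      rw [Finset.sum_eq_single (i, a)]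
      · rw [hx1i, dd_self, mul_one]
      · rintro ⟨j, a'⟩ _ hne
        by_cases hj : j = i
        · subst hj
          have ha' : (a : Fin r) ≠ (a' : Fin r) := by
            intro hh
            exact hne (by simp [Subtype.ext (hh.symm)])
          rw [hx1i, dd_ne ha', mul_zero]
        · rw [show x1 j = 0 from if_neg hj, dd_ne (Ne.symm a'.2), mul_zero]
      · intro hmem; exact absurd (mem_univ _) hmem
    have e2 : (∑ p : Fin m × ({a : Fin r // a ≠ 0} × {b : Fin r // b ≠ 0}),
        g (Sum.inr (Sum.inr p)) * (dd (p.2.1 : Fin r) (x1 p.1)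
          * dd (p.2.2 : Fin r) (x1 (csucc hm p.1)))) = 0 := by
      refine Finset.sum_eq_zero fun p _ => ?_
      by_cases hj : p.1 = i
      · have : x1 (csucc hm p.1) = 0 := if_neg (by rw [hj]; exact csucc_ne hm i)
        rw [this, dd_ne (Ne.symm p.2.2.2), mul_zero, mul_zero]
      · rw [show x1 p.1 = 0 from if_neg hj, dd_ne (Ne.symm p.2.1.2), zero_mul, mul_zero]
    rw [e1, e2, h0] at h
    linarith
  -- Stage 3 : all coefficients
  rintro (u | p | ⟨i, a, b⟩)
  · exact h0
  · exact h1 p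
  · set x2 : Fin m → Fin r :=
      fun k => if k = csucc hm i then (b : Fin r) else if k = i then (a : Fin r) else 0 with hx2
    have h := expand x2
    have hx2s : x2 (csucc hm i) = (b : Fin r) := if_pos rfl
    have hx2i : x2 i = (a : Fin r) := by
      have hne : i ≠ csucc hm i := Ne.symm (csucc_ne hm i)
      simp [hx2, hne]
    have e1 : (∑ p : Fin m × {a : Fin r // a ≠ 0},
        g (Sum.inr (Sum.inl p)) * dd (p.2 : Fin r) (x2 p.1)) = 0 :=
      Finset.sum_eq_zero fun p _ => by rw [h1 p, zero_mul]
    have e2 : (∑ p : Fin m × ({a : Fin r // a ≠ 0} × {b : Fin r // b ≠ 0}),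
        g (Sum.inr (Sum.inr p)) * (dd (p.2.1 : Fin r) (x2 p.1)
          * dd (p.2.2 : Fin r) (x2 (csucc hm p.1))))
        = g (Sum.inr (Sum.inr (i, a, b))) := by
      rw [Finset.sum_eq_single (i, a, b)]
      · rw [hx2i, hx2s, dd_self, dd_self, mul_one, mul_one]
      · rintro ⟨j, a', b'⟩ _ hne
        by_cases hj : j = i
        · subst hj
          by_cases ha' : a' = a
          · subst ha'
            have hb' : b' ≠ b := by
              intro hh; exact hne (by rw [hh])
            have : (b : Fin r) ≠ (b' : Fin r) := fun hh => hb' (Subtype.ext hh.symm)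
            rw [hx2s, dd_ne this, mul_zero, mul_zero]
          · have : (a : Fin r) ≠ (a' : Fin r) := fun hh => ha' (Subtype.ext hh.symm)
            rw [hx2i, dd_ne this, zero_mul, mul_zero]
        · by_cases hj' : j = csucc hm i
          · subst hj'
            have hcc : x2 (csucc hm (csucc hm i)) = 0 := by
              have c1 : csucc hm (csucc hm i) ≠ csucc hm i :=
                fun hh => csucc_ne hm i (csucc_inj hm hh)
              have c2 : csucc hm (csucc hm i) ≠ i := csucc_csucc_ne hm i
              simp [hx2, c1, c2]
            rw [hcc, dd_ne (Ne.symm b'.2), mul_zero, mul_zero]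
          · have : x2 j = 0 := by
              simp [hx2, hj, hj']
            rw [this, dd_ne (Ne.symm a'.2), zero_mul, mul_zero]
      · intro hmem; exact absurd (mem_univ _) hmem
    rw [e1, e2, h0] at h
    linarith

lemma card_BIdx (m : ℕ) : Fintype.card (BIdx m r) = 1 + m * (r - 1) + m * ((r - 1) * (r - 1)) := by
  have hsub : Fintype.card {a : Fin r // a ≠ 0} = r - 1 := by
    have h := Fintype.card_subtype_compl (fun a : Fin r => a = 0)
    rw [Fintype.card_subtype_eq, Fintype.card_fin] at h
    exact h
  simp only [BIdx, Fintype.card_sum, Fintype.card_prod, Fintype.card_unit, Fintype.card_fin, hsub]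
  ring

end CycAux

open CycAux Module

/-- For the cyclic complex on `[m]` (`m ≥ 3`), with all variables having `r`
states, `rank(A_Γ) = 1 - m r + m r²`. -/
theorem rank_hierMatrix_cyclic (m : ℕ) (hm : 3 ≤ m) (Γ : Finset (Finset (Fin m)))
    (hΓ : Γ = {(∅ : Finset (Fin m))}
        ∪ univ.image (fun i : Fin m => ({i} : Finset (Fin m)))
        ∪ univ.image (fun i : Fin m =>
            ({i, ⟨((i : ℕ) + 1) % m, Nat.mod_lt _ (by omega)⟩} : Finset (Fin m))))
    (r : ℕ) (hr : 0 < r) :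
    ((hierMatrix Γ fun _ => r).rank : ℤ)
      = 1 - m * r + m * (r : ℤ) ^ 2 := by
  haveI : NeZero r := ⟨hr.ne'⟩
  have hΓ' : Γ = cyclicΓ hm := hΓ
  clear hΓ
  subst hΓ'
  rw [Matrix.rank_eq_finrank_span_row, Matrix.row, span_rows hm, finrank_span_eq_card (Bf_li hm),
    card_BIdx]
  have h1 : ((r - 1 : ℕ) : ℤ) = (r : ℤ) - 1 := by omega
  push_cast [h1]
  ring
end

section
/- Let m ≥ 2 and let Γ be the boundary of the (m−1)-simplex on [m], i.e., Γ consists of all subsets of [m] except [m] itself. Let r be a positive integer and take r_1 = ⋯ = r_m = r. Then rank(A_Γ) = ∑_{i=0}^{m−1} (−1)^{m−1−i} \binom{m}{i} r^i. -/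
open Finset

namespace BRank

variable {m s : ℕ}

def cMat (s : ℕ) (a : Fin (s+1)) (b : Fin s) : ℚ :=
  if a = b.castSucc then 1 else if a = Fin.last s then -1 else 0

lemma cMat_castSucc (a b : Fin s) : cMat s a.castSucc b = if a = b then 1 else 0 := by
  by_cases h : a = b
  · simp [cMat, h]
  · simp [cMat, h, Fin.castSucc_inj, (Fin.castSucc_lt_last a).ne]

lemma cMat_sum (b : Fin s) : ∑ a : Fin (s+1), cMat s a b = 0 := by
  rw [Fin.sum_univ_castSucc]
  have h1 : ∑ a : Fin s, cMat s a.castSucc b = 1 := by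
    simp [cMat_castSucc]
  have h2 : cMat s (Fin.last s) b = -1 := by
    simp [cMat, (Fin.castSucc_lt_last b).ne']
  rw [h1, h2]; ring

def Bmat (m s : ℕ) : Matrix (Fin m → Fin (s+1)) (Fin m → Fin s) ℚ :=
  fun i j => ∏ f, cMat s (i f) (j f)

lemma Bmat_mulVec_castSucc (g : (Fin m → Fin s) → ℚ) (j : Fin m → Fin s) :
    (Bmat m s).mulVec g (fun f => (j f).castSucc) = g j := by
  simp only [Matrix.mulVec, dotProduct, Bmat]
  have key : ∀ j' : Fin m → Fin s,
      (∏ f, cMat s ((j f).castSucc) (j' f)) = if j = j' then 1 else 0 := by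
    intro j'
    simp only [cMat_castSucc]
    rw [Finset.prod_boole]
    congr 1
    simp [funext_iff]
  simp only [key, ite_mul, one_mul, zero_mul]
  simp

lemma Bmat_marg (g : (Fin m → Fin s) → ℚ) (f : Fin m) (i : Fin m → Fin (s+1)) :
    ∑ a : Fin (s+1), (Bmat m s).mulVec g (Function.update i f a) = 0 := by
  simp only [Matrix.mulVec, dotProduct, Bmat]
  rw [Finset.sum_comm]
  apply Finset.sum_eq_zero
  intro j _
  rw [← Finset.sum_mul]
  have key : ∑ a : Fin (s+1), ∏ f', cMat s (Function.update i f a f') (j f') = 0 := by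
    have h1 : ∀ a : Fin (s+1), (∏ f', cMat s (Function.update i f a f') (j f'))
        = cMat s a (j f) * ∏ f' ∈ univ.erase f, cMat s (i f') (j f') := by
      intro a
      rw [← Finset.mul_prod_erase univ _ (Finset.mem_univ f), Function.update_self]
      congr 1
      apply Finset.prod_congr rfl
      intro x hx
      rw [Function.update_of_ne (Finset.ne_of_mem_erase hx)]
    simp only [h1, ← Finset.sum_mul, cMat_sum, zero_mul]
  rw [key, zero_mul]

lemma eq_zero_of_marg (d : (Fin m → Fin (s+1)) → ℚ)
    (hker : ∀ (f : Fin m) (i : Fin m → Fin (s+1)),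
      ∑ a : Fin (s+1), d (Function.update i f a) = 0)
    (hbase : ∀ j : Fin m → Fin s, d (fun f => (j f).castSucc) = 0) :
    ∀ i, d i = 0 := by
  have base' : ∀ i : Fin m → Fin (s+1), (∀ f, i f ≠ Fin.last s) → d i = 0 := by
    intro i h0
    have : i = fun f => ((i f).castPred (h0 f)).castSucc := by
      funext f; simp [Fin.castSucc_castPred]
    rw [this]; exact hbase _
  suffices H : ∀ (k : ℕ) (i : Fin m → Fin (s+1)),
      (univ.filter fun f => i f = Fin.last s).card ≤ k → d i = 0 by
    intro i; exact H _ i le_rfl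
  intro k
  induction k with
  | zero =>
    intro i hi
    apply base'
    intro f hf
    have hmem : f ∈ univ.filter (fun f => i f = Fin.last s) := by simp [hf]
    have := Finset.card_pos.mpr ⟨f, hmem⟩
    omega
  | succ k ih =>
    intro i hi
    by_cases hex : ∃ f, i f = Fin.last s
    · obtain ⟨f, hf⟩ := hex
      have hfmem : f ∈ univ.filter (fun f => i f = Fin.last s) := by simp [hf]
      have hupd : ∀ a : Fin s, d (Function.update i f a.castSucc) = 0 := by
        intro a
        apply ih
        have hsub : (univ.filter fun f' => Function.update i f a.castSucc f' = Fin.last s)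
            ⊆ (univ.filter fun f' => i f' = Fin.last s).erase f := by
          intro g hg
          rw [Finset.mem_filter] at hg
          rcases eq_or_ne g f with rfl | hgf
          · rw [Function.update_self] at hg
            exact absurd hg.2 (Fin.castSucc_lt_last a).ne
          · rw [Function.update_of_ne hgf] at hg
            exact Finset.mem_erase.mpr ⟨hgf, Finset.mem_filter.mpr ⟨Finset.mem_univ _, hg.2⟩⟩
        calc _ ≤ ((univ.filter fun f' => i f' = Fin.last s).erase f).card :=
              Finset.card_le_card hsub
          _ = (univ.filter fun f' => i f' = Fin.last s).card - 1 :=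
              Finset.card_erase_of_mem hfmem
          _ ≤ k := by omega
      have hsum := hker f i
      rw [Fin.sum_univ_castSucc] at hsum
      have hlast : Function.update i f (Fin.last s) = i := by
        rw [← hf]; exact Function.update_eq_self f i
      rw [hlast] at hsum
      have : ∑ a : Fin s, d (Function.update i f a.castSucc) = 0 :=
        Finset.sum_eq_zero fun a _ => hupd a
      linarith
    · push_neg at hex
      exact base' i hex

lemma Bmat_inj : Function.Injective (Bmat m s).mulVecLin := by
  rw [← LinearMap.ker_eq_bot]
  apply (Submodule.eq_bot_iff _).mpr
  intro g hg
  rw [LinearMap.mem_ker, Matrix.mulVecLin_apply] at hg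
  funext j
  have := Bmat_mulVec_castSucc g j
  rw [hg] at this
  simpa using this.symm

lemma exists_Bmat_rep (h : (Fin m → Fin (s+1)) → ℚ)
    (hker : ∀ (f : Fin m) (i : Fin m → Fin (s+1)),
      ∑ a : Fin (s+1), h (Function.update i f a) = 0) :
    h = (Bmat m s).mulVec (fun j => h (fun f => (j f).castSucc)) := by
  set g : (Fin m → Fin s) → ℚ := fun j => h (fun f => (j f).castSucc) with hg
  set d : (Fin m → Fin (s+1)) → ℚ := fun i => h i - (Bmat m s).mulVec g i with hd
  have hdz : ∀ i, d i = 0 := by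
    apply eq_zero_of_marg
    · intro f i
      simp only [hd, Finset.sum_sub_distrib]
      rw [hker f i, Bmat_marg g f i, sub_zero]
    · intro j
      show h _ - (Bmat m s).mulVec g _ = 0
      rw [Bmat_mulVec_castSucc g j]
      simp [hg]
  funext i
  have := hdz i
  simp only [hd] at this
  linarith

lemma halt (hm : 1 ≤ m) (x : ℤ) :
    ∑ i ∈ Finset.range m, (-1:ℤ)^(m-1-i) * (Nat.choose m i) * (x+1)^i
      = (x+1)^m - x^m := by
  have h := add_pow (x+1) (-1 : ℤ) m
  rw [Finset.sum_range_succ] at h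
  have h0 : (x + 1 + -1) ^ m = x ^ m := by ring_nf
  rw [h0, Nat.sub_self, Nat.choose_self] at h
  simp only [pow_zero, mul_one, Nat.cast_one] at h
  have hterm : ∀ i ∈ Finset.range m,
      (-1:ℤ)^(m-1-i) * (Nat.choose m i) * (x+1)^i
        = -((x+1)^i * (-1:ℤ)^(m-i) * (Nat.choose m i)) := by
    intro i hi
    rw [Finset.mem_range] at hi
    have hmi : m - i = (m - 1 - i) + 1 := by omega
    rw [hmi, pow_succ]
    ring
  rw [Finset.sum_congr rfl hterm, Finset.sum_neg_distrib]
  linarith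

lemma facet_boundary_iff (F : Finset (Fin m)) :
    IsFacet ((univ : Finset (Finset (Fin m))).erase univ) F ↔ ∃ f, F = univ.erase f := by
  constructor
  · rintro ⟨hF, hmax⟩
    rw [Finset.mem_erase] at hF
    obtain ⟨f, hf⟩ : ∃ f, f ∉ F := by
      by_contra hc; push_neg at hc
      exact hF.1 (Finset.eq_univ_iff_forall.mpr hc)
    refine ⟨f, ?_⟩
    have h1 : F ⊆ univ.erase f := fun y hy =>
      Finset.mem_erase.mpr ⟨fun hyf => hf (hyf ▸ hy), Finset.mem_univ y⟩
    have h2 : (univ.erase f : Finset (Fin m)) ∈ (univ : Finset (Finset (Fin m))).erase univ := by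
      rw [Finset.mem_erase]
      refine ⟨?_, Finset.mem_univ _⟩
      intro hc
      have : f ∈ (univ : Finset (Fin m)).erase f := by rw [hc]; exact Finset.mem_univ f
      exact (Finset.mem_erase.mp this).1 rfl
    exact (hmax _ h2 h1).symm
  · rintro ⟨f, rfl⟩
    constructor
    · rw [Finset.mem_erase]
      refine ⟨?_, Finset.mem_univ _⟩
      intro hc
      have : f ∈ (univ : Finset (Fin m)).erase f := by rw [hc]; exact Finset.mem_univ f
      exact (Finset.mem_erase.mp this).1 rfl
    · intro G hG hsub
      have hfG : f ∉ G := by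
        intro hfG
        apply (Finset.mem_erase.mp hG).1
        apply Finset.eq_univ_iff_forall.mpr
        intro z
        by_cases hz : z = f
        · exact hz ▸ hfG
        · exact hsub (Finset.mem_erase.mpr ⟨hz, Finset.mem_univ _⟩)
      exact Finset.Subset.antisymm
        (fun y hy => Finset.mem_erase.mpr ⟨fun h => hfG (h ▸ hy), Finset.mem_univ _⟩) hsub

/-- extend a tuple on `univ.erase f` to all of `Fin m` with value `a` at `f`. -/
def ext (s : ℕ) (f : Fin m)
    (j : ∀ _g : ((univ : Finset (Fin m)).erase f : Finset (Fin m)), Fin (s+1)) (a : Fin (s+1)) :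
    Fin m → Fin (s+1) :=
  fun g => if hg : g ∈ (univ : Finset (Fin m)).erase f then j ⟨g, hg⟩ else a

lemma ext_apply_mem (f : Fin m) (j) (a : Fin (s+1)) (g : Fin m)
    (hg : g ∈ (univ : Finset (Fin m)).erase f) : ext s f j a g = j ⟨g, hg⟩ := dif_pos hg

lemma ext_apply_self (f : Fin m) (j) (a : Fin (s+1)) : ext s f j a f = a := by
  apply dif_neg
  simp

lemma row_sum (h : (Fin m → Fin (s+1)) → ℚ) (f : Fin m)
    (hf : IsFacet ((univ : Finset (Finset (Fin m))).erase univ) ((univ : Finset (Fin m)).erase f))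
    (j : ∀ _g : ((univ : Finset (Fin m)).erase f : Finset (Fin m)), Fin (s+1)) :
    (hierMatrix ((univ : Finset (Finset (Fin m))).erase univ) (fun _ => s+1)).mulVec h
        ⟨⟨(univ : Finset (Fin m)).erase f, hf⟩, j⟩
      = ∑ a : Fin (s+1), h (ext s f j a) := by
  simp only [Matrix.mulVec, dotProduct, hierMatrix, ite_mul, one_mul, zero_mul]
  rw [← Finset.sum_filter]
  apply Finset.sum_nbij' (fun i => i f) (fun a => ext s f j a)
  · intro a _; exact Finset.mem_univ _
  · intro a _
    rw [Finset.mem_filter]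
    refine ⟨Finset.mem_univ _, ?_⟩
    intro g
    exact (ext_apply_mem f j a g g.2).symm
  · intro i hi
    rw [Finset.mem_filter] at hi
    funext g
    by_cases hg : g ∈ (univ : Finset (Fin m)).erase f
    · rw [ext_apply_mem f j _ g hg]
      exact hi.2 ⟨g, hg⟩
    · have : g = f := by
        by_contra hc
        exact hg (Finset.mem_erase.mpr ⟨hc, Finset.mem_univ _⟩)
      subst this
      exact ext_apply_self g j _
  · intro a _
    exact ext_apply_self f j a
  · intro i hi
    rw [Finset.mem_filter] at hi
    congr 1
    funext g
    by_cases hg : g ∈ (univ : Finset (Fin m)).erase f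
    · rw [ext_apply_mem f j _ g hg]
      exact (hi.2 ⟨g, hg⟩).symm
    · have : g = f := by
        by_contra hc
        exact hg (Finset.mem_erase.mpr ⟨hc, Finset.mem_univ _⟩)
      subst this
      exact (ext_apply_self g j _).symm

lemma ext_eq_update (f : Fin m) (i : Fin m → Fin (s+1)) (a : Fin (s+1)) :
    ext s f (fun g => i g.1) a = Function.update i f a := by
  funext g
  by_cases hg : g = f
  · subst hg; rw [ext_apply_self, Function.update_self]
  · rw [ext_apply_mem f _ a g (Finset.mem_erase.mpr ⟨hg, Finset.mem_univ _⟩),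
      Function.update_of_ne hg]

lemma ext_eq_update' (f : Fin m) (j) (a : Fin (s+1)) :
    ext s f j a = Function.update (ext s f j 0) f a := by
  funext g
  by_cases hg : g = f
  · subst hg; rw [ext_apply_self, Function.update_self]
  · have hmem : g ∈ (univ : Finset (Fin m)).erase f := Finset.mem_erase.mpr ⟨hg, Finset.mem_univ _⟩
    rw [ext_apply_mem f j a g hmem, Function.update_of_ne hg, ext_apply_mem f j 0 g hmem]

end BRank

/-- For the boundary of the `(m-1)`-simplex (all proper subsets of `[m]`, `m ≥ 2`),
with all variables having `r` states,
`rank(A_Γ) = ∑_{i=0}^{m-1} (-1)^{m-1-i} C(m,i) r^i`. -/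
theorem rank_hierMatrix_boundarySimplex (m : ℕ) (hm : 2 ≤ m)
    (Γ : Finset (Finset (Fin m)))
    (hΓ : Γ = (univ : Finset (Finset (Fin m))).erase univ)
    (r : ℕ) (hr : 0 < r) :
    ((hierMatrix Γ fun _ => r).rank : ℤ)
      = ∑ i ∈ Finset.range m, (-1 : ℤ) ^ (m - 1 - i) * Nat.choose m i * (r : ℤ) ^ i := by
  subst hΓ
  obtain ⟨s, rfl⟩ : ∃ s, r = s + 1 := ⟨r - 1, by omega⟩
  set A := hierMatrix ((univ : Finset (Finset (Fin m))).erase univ)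
      (fun _ : Fin m => s + 1) with hA
  have hkerA : LinearMap.ker A.mulVecLin = LinearMap.range (BRank.Bmat m s).mulVecLin := by
    ext h
    rw [LinearMap.mem_ker, LinearMap.mem_range]
    constructor
    · intro hker0
      rw [Matrix.mulVecLin_apply] at hker0
      have hmarg : ∀ (f : Fin m) (i : Fin m → Fin (s+1)),
          ∑ a : Fin (s+1), h (Function.update i f a) = 0 := by
        intro f i
        have hf : IsFacet ((univ : Finset (Finset (Fin m))).erase univ)
            ((univ : Finset (Fin m)).erase f) := (BRank.facet_boundary_iff _).mpr ⟨f, rfl⟩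
        have h0 : A.mulVec h ⟨⟨(univ : Finset (Fin m)).erase f, hf⟩, fun g => i g.1⟩ = 0 :=
          congrFun hker0 _
        rw [hA, BRank.row_sum h f hf (fun g => i g.1)] at h0
        calc ∑ a : Fin (s+1), h (Function.update i f a)
            = ∑ a : Fin (s+1), h (BRank.ext s f (fun g => i g.1) a) := by
              apply Finset.sum_congr rfl
              intro a _
              rw [BRank.ext_eq_update]
          _ = 0 := h0
      exact ⟨fun j => h (fun f => (j f).castSucc), by
        rw [Matrix.mulVecLin_apply]
        exact (BRank.exists_Bmat_rep h hmarg).symm⟩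
    · rintro ⟨g, rfl⟩
      rw [Matrix.mulVecLin_apply]
      funext row
      obtain ⟨⟨F, hF⟩, j⟩ := row
      obtain ⟨f, rfl⟩ := (BRank.facet_boundary_iff F).mp hF
      rw [hA, BRank.row_sum _ f hF j]
      have hrw : ∀ a : Fin (s+1), BRank.ext s f j a = Function.update (BRank.ext s f j 0) f a :=
        fun a => BRank.ext_eq_update' f j a
      calc ∑ a : Fin (s+1), (BRank.Bmat m s).mulVecLin g (BRank.ext s f j a)
          = ∑ a : Fin (s+1), (BRank.Bmat m s).mulVec g
              (Function.update (BRank.ext s f j 0) f a) := by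
            apply Finset.sum_congr rfl
            intro a _
            rw [hrw a, Matrix.mulVecLin_apply]
        _ = 0 := BRank.Bmat_marg g f _
  have hinj := BRank.Bmat_inj (m := m) (s := s)
  have h1 := LinearMap.finrank_range_add_finrank_ker A.mulVecLin
  rw [hkerA, LinearMap.finrank_range_of_inj hinj,
      Module.finrank_fintype_fun_eq_card, Module.finrank_fintype_fun_eq_card,
      Fintype.card_fun, Fintype.card_fun, Fintype.card_fin, Fintype.card_fin,
      Fintype.card_fin] at h1
  have hrank : A.rank + s ^ m = (s + 1) ^ m := h1
  have hZ : (A.rank : ℤ) = ((s:ℤ) + 1) ^ m - (s:ℤ) ^ m := by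
    have := congrArg (fun n : ℕ => (n : ℤ)) hrank
    push_cast at this
    linarith
  rw [hZ]
  have hsum := BRank.halt (m := m) (by omega) (s : ℤ)
  push_cast
  linarith
end
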